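/- Let P̂⁰ be the q-deformed 9×9 projector (1/(q²+q+1)) times the matrix with nonzero block at rows/columns {3,5,7} given by [[1, √q, q],[√q, q, q√q],[q, q√q, q²]], and define R̂(w) = I₉ + w P̂⁰. Then for any scalars w, w'' with 1 − q²(1+q+q²)⁻² w w'' ≠ 0, setting w' = (w + w'' + ww'')/(1 − q²(1+q+q²)⁻² w w''), one has R̂₁₂(w)R̂₂₃(w')R̂₁₂(w'') = R̂₂₃(w'')R̂₁₂(w')R̂₂₃(w), where R̂₁₂(x) = R̂(x) ⊗ I₃ and R̂₂₃(x) = I₃ ⊗ R̂(x). -/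

import Mathlib

/-!
`P0 q` is the orthogonal projector onto `v = e₃ + √q e₅ + q e₇`, whose squared norm is
`N = 1 + q + q²`. Hence `e = P0 ⊗ 1` and `f = 1 ⊗ P0` are idempotents. Up to the factor `N`
they are sums of rank-one operators `∑ₐ xₐ xₐᵀ` and `∑ₐ yₐ yₐᵀ` with `⟪xₐ, y_c⟫ = q δ_{ac}`,
which gives the Temperley–Lieb relations `efe = τ e`, `fef = τ f` with `τ = q² / N²`. For any
two such idempotents, expanding both sides of the braid relation for `1 + w e`, `1 + w f` leaves
the single scalar condition `w' (1 - τ w w'') = w + w'' + w w''`.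
-/

open Matrix

/-- The q-deformed 9×9 projector `P⁰`: 1/(q²+q+1) times the matrix with the
block [[1,√q,q],[√q,q,q√q],[q,q√q,q²]] at rows/columns (3,5,7) (1-indexed). -/
noncomputable def P0 (q : ℝ) : Matrix (Fin 9) (Fin 9) ℝ :=
  (q ^ 2 + q + 1)⁻¹ • Matrix.of (fun i j : Fin 9 =>
    match i.val, j.val with
    | 2, 2 => 1
    | 2, 4 => Real.sqrt q
    | 2, 6 => q
    | 4, 2 => Real.sqrt q
    | 4, 4 => q
    | 4, 6 => q * Real.sqrt q
    | 6, 2 => q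
    | 6, 4 => q * Real.sqrt q
    | 6, 6 => q ^ 2
    | _, _ => 0)

/-- Standard identification giving the 27×27 matrix `A ⊗ I₃`. -/
noncomputable def lift12 (A : Matrix (Fin 9) (Fin 9) ℝ) : Matrix (Fin 27) (Fin 27) ℝ :=
  Matrix.reindex (finProdFinEquiv.trans (finCongr (by norm_num)))
    (finProdFinEquiv.trans (finCongr (by norm_num)))
    (Matrix.kroneckerMap (· * ·) A (1 : Matrix (Fin 3) (Fin 3) ℝ))

/-- Standard identification giving the 27×27 matrix `I₃ ⊗ A`. -/
noncomputable def lift23 (A : Matrix (Fin 9) (Fin 9) ℝ) : Matrix (Fin 27) (Fin 27) ℝ :=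
  Matrix.reindex (finProdFinEquiv.trans (finCongr (by norm_num)))
    (finProdFinEquiv.trans (finCongr (by norm_num)))
    (Matrix.kroneckerMap (· * ·) (1 : Matrix (Fin 3) (Fin 3) ℝ) A)

/-- `R̂(w) = I₉ + w P⁰`. -/
noncomputable def Rw (q w : ℝ) : Matrix (Fin 9) (Fin 9) ℝ := 1 + w • P0 q

theorem yangBaxter_of_temperleyLieb {R A : Type*} [CommRing R] [Ring A] [Algebra R A]
    {e f : A} {τ a b c : R} (he : e * e = e) (hf : f * f = f)
    (hefe : e * f * e = τ • e) (hfef : f * e * f = τ • f)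
    (hb : b * (1 - τ * a * c) = a + c + a * c) :
    (1 + a • e) * (1 + b • f) * (1 + c • e) = (1 + c • f) * (1 + b • e) * (1 + a • f) := by
  simp only [mul_add, add_mul, mul_one, one_mul, smul_mul_assoc, mul_smul_comm, mul_assoc]
  rw [← mul_assoc e f e, ← mul_assoc f e f, he, hf, hefe, hfef]
  linear_combination (norm := module) hb • (f - e)

section RankOne

variable {ι n R : Type*} [Fintype ι] [DecidableEq ι] [Fintype n] [CommRing R]

theorem sum_vecMulVec_mul_sum_vecMulVec (x y z : ι → n → R) (κ : R)
    (hyz : ∀ a c, y a ⬝ᵥ z c = if a = c then κ else 0) :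
    (∑ a, vecMulVec (x a) (y a)) * (∑ c, vecMulVec (z c) (z c)) =
      κ • ∑ a, vecMulVec (x a) (z a) := by
  simp_rw [Finset.sum_mul, Finset.mul_sum, vecMulVec_mul_vecMulVec, vecMulVec_smul, hyz,
    ite_smul, zero_smul, Finset.sum_ite_eq, Finset.mem_univ, if_true, Finset.smul_sum]

theorem sum_vecMulVec_mul_mul_of_dotProduct (x y : ι → n → R) (κ : R)
    (hxy : ∀ a c, x a ⬝ᵥ y c = if a = c then κ else 0) :
    (∑ a, vecMulVec (x a) (x a)) * (∑ c, vecMulVec (y c) (y c)) * (∑ a, vecMulVec (x a) (x a)) =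
      κ ^ 2 • ∑ a, vecMulVec (x a) (x a) := by
  have hyx : ∀ c a, y c ⬝ᵥ x a = if c = a then κ else 0 := fun c a => by
    rw [dotProduct_comm, hxy]
    exact if_congr eq_comm rfl rfl
  rw [sum_vecMulVec_mul_sum_vecMulVec x x y κ hxy, smul_mul_assoc,
    sum_vecMulVec_mul_sum_vecMulVec x y x κ hyx, smul_smul, sq]

end RankOne

section Lift

variable (A B : Matrix (Fin 9) (Fin 9) ℝ) (r : ℝ)

theorem lift12_apply (k l : Fin 27) :
    lift12 A k l = A ⟨k / 3, by omega⟩ ⟨l / 3, by omega⟩ *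
      (1 : Matrix (Fin 3) (Fin 3) ℝ) ⟨k % 3, by omega⟩ ⟨l % 3, by omega⟩ :=
  rfl

theorem lift23_apply (k l : Fin 27) :
    lift23 A k l = (1 : Matrix (Fin 3) (Fin 3) ℝ) ⟨k / 9, by omega⟩ ⟨l / 9, by omega⟩ *
      A ⟨k % 9, by omega⟩ ⟨l % 9, by omega⟩ :=
  rfl

theorem lift12_mul : lift12 (A * B) = lift12 A * lift12 B := by
  simp only [lift12, reindex_apply, submatrix_mul_equiv, ← mul_kronecker_mul, one_mul]

theorem lift23_mul : lift23 (A * B) = lift23 A * lift23 B := by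
  simp only [lift23, reindex_apply, submatrix_mul_equiv, ← mul_kronecker_mul, one_mul]

theorem lift12_smul : lift12 (r • A) = r • lift12 A := by
  ext k l
  simp [lift12_apply, mul_assoc]

theorem lift23_smul : lift23 (r • A) = r • lift23 A := by
  ext k l
  simp [lift23_apply, mul_left_comm]

theorem lift12_add : lift12 (A + B) = lift12 A + lift12 B := by
  ext k l
  simp [lift12_apply, add_mul]

theorem lift23_add : lift23 (A + B) = lift23 A + lift23 B := by
  ext k l
  simp [lift23_apply, mul_add]

theorem lift12_one : lift12 1 = 1 := by
  simp only [lift12, one_kronecker_one, reindex_apply, submatrix_one_equiv]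

theorem lift23_one : lift23 1 = 1 := by
  simp only [lift23, one_kronecker_one, reindex_apply, submatrix_one_equiv]

end Lift

-- Indexed by `ℕ` so that the vectors on `Fin 27 ≃ Fin 9 × Fin 3 ≃ Fin 3 × Fin 9` below can be
-- written with `k / 3`, `k % 3`, `k / 9`, `k % 9`.
noncomputable def p0Coeff (q : ℝ) : ℕ → ℝ := fun i =>
  if i = 2 then 1 else if i = 4 then √q else if i = 6 then q else 0

noncomputable def p0Vec (q : ℝ) : Fin 9 → ℝ := fun i => p0Coeff q i

-- `p0Vec q ⊗ eₐ`
noncomputable def p0Vec12 (q : ℝ) (a : Fin 3) : Fin 27 → ℝ := fun k =>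
  p0Coeff q (k / 3) * if k % 3 = a.val then 1 else 0

-- `e_c ⊗ p0Vec q`
noncomputable def p0Vec23 (q : ℝ) (c : Fin 3) : Fin 27 → ℝ := fun k =>
  (if k / 9 = c.val then 1 else 0) * p0Coeff q (k % 9)

theorem lift12_vecMulVec_p0Vec (q : ℝ) :
    lift12 (vecMulVec (p0Vec q) (p0Vec q)) = ∑ a, vecMulVec (p0Vec12 q a) (p0Vec12 q a) := by
  ext k l
  have hk : k.val % 3 = 0 ∨ k.val % 3 = 1 ∨ k.val % 3 = 2 := by omega
  have hl : l.val % 3 = 0 ∨ l.val % 3 = 1 ∨ l.val % 3 = 2 := by omega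
  rcases hk with hk | hk | hk <;> rcases hl with hl | hl | hl <;>
    simp [lift12_apply, vecMulVec_apply, Matrix.sum_apply, one_apply, Fin.ext_iff,
      Fin.sum_univ_three, p0Vec, p0Vec12, hk, hl]

theorem lift23_vecMulVec_p0Vec (q : ℝ) :
    lift23 (vecMulVec (p0Vec q) (p0Vec q)) = ∑ c, vecMulVec (p0Vec23 q c) (p0Vec23 q c) := by
  ext k l
  have hk : k.val / 9 = 0 ∨ k.val / 9 = 1 ∨ k.val / 9 = 2 := by omega
  have hl : l.val / 9 = 0 ∨ l.val / 9 = 1 ∨ l.val / 9 = 2 := by omega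
  rcases hk with hk | hk | hk <;> rcases hl with hl | hl | hl <;>
    simp [lift23_apply, vecMulVec_apply, Matrix.sum_apply, one_apply, Fin.ext_iff,
      Fin.sum_univ_three, p0Vec, p0Vec23, hk, hl]

section Projector

variable {q : ℝ}

theorem P0_eq_smul_vecMulVec (hq : 0 ≤ q) :
    P0 q = (q ^ 2 + q + 1)⁻¹ • vecMulVec (p0Vec q) (p0Vec q) := by
  unfold P0
  congr 1
  ext i j
  fin_cases i <;> fin_cases j <;>
    simp [vecMulVec_apply, p0Vec, p0Coeff, Real.mul_self_sqrt hq] <;> ring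

theorem p0Vec_dotProduct_self (hq : 0 ≤ q) : p0Vec q ⬝ᵥ p0Vec q = q ^ 2 + q + 1 := by
  simp [dotProduct, Fin.sum_univ_succ, p0Vec, p0Coeff, Real.mul_self_sqrt hq]
  ring

theorem P0_mul_self (hq : 0 ≤ q) : P0 q * P0 q = P0 q := by
  have hN : q ^ 2 + q + 1 ≠ 0 := by positivity
  rw [P0_eq_smul_vecMulVec hq, smul_mul_smul_comm, vecMulVec_mul_vecMulVec,
    p0Vec_dotProduct_self hq, vecMulVec_smul, smul_smul]
  congr 1
  field_simp

theorem p0Vec12_dotProduct_p0Vec23 (hq : 0 ≤ q) (a c : Fin 3) :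
    p0Vec12 q a ⬝ᵥ p0Vec23 q c = if a = c then q else 0 := by
  simp only [dotProduct, p0Vec12, p0Vec23]
  rw [Fin.sum_univ_eq_sum_range (fun k => p0Coeff q (k / 3) * (if k % 3 = a.val then 1 else 0) *
    ((if k / 9 = c.val then 1 else 0) * p0Coeff q (k % 9))) 27]
  fin_cases a <;> fin_cases c <;>
    norm_num [Finset.sum_range_succ, p0Coeff, Real.mul_self_sqrt hq]

theorem p0Vec23_dotProduct_p0Vec12 (hq : 0 ≤ q) (c a : Fin 3) :
    p0Vec23 q c ⬝ᵥ p0Vec12 q a = if c = a then q else 0 := by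
  rw [dotProduct_comm, p0Vec12_dotProduct_p0Vec23 hq]
  exact if_congr eq_comm rfl rfl

theorem lift12_P0_mul_lift23_P0_mul_lift12_P0 (hq : 0 ≤ q) :
    lift12 (P0 q) * lift23 (P0 q) * lift12 (P0 q) =
      (q ^ 2 * ((1 + q + q ^ 2)⁻¹) ^ 2) • lift12 (P0 q) := by
  simp only [P0_eq_smul_vecMulVec hq, lift12_smul, lift23_smul, lift12_vecMulVec_p0Vec,
    lift23_vecMulVec_p0Vec, smul_mul_smul_comm,
    sum_vecMulVec_mul_mul_of_dotProduct _ _ q (p0Vec12_dotProduct_p0Vec23 hq), smul_smul]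
  congr 1
  ring

theorem lift23_P0_mul_lift12_P0_mul_lift23_P0 (hq : 0 ≤ q) :
    lift23 (P0 q) * lift12 (P0 q) * lift23 (P0 q) =
      (q ^ 2 * ((1 + q + q ^ 2)⁻¹) ^ 2) • lift23 (P0 q) := by
  simp only [P0_eq_smul_vecMulVec hq, lift12_smul, lift23_smul, lift12_vecMulVec_p0Vec,
    lift23_vecMulVec_p0Vec, smul_mul_smul_comm,
    sum_vecMulVec_mul_mul_of_dotProduct _ _ q (p0Vec23_dotProduct_p0Vec12 hq), smul_smul]
  congr 1
  ring

end Projector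

theorem stmt_12 (q : ℝ) (hq : 0 < q) (w w'' : ℝ)
    (hden : 1 - q ^ 2 * ((1 + q + q ^ 2)⁻¹) ^ 2 * w * w'' ≠ 0)
    (w' : ℝ)
    (hw' : w' = (w + w'' + w * w'') / (1 - q ^ 2 * ((1 + q + q ^ 2)⁻¹) ^ 2 * w * w'')) :
    lift12 (Rw q w) * lift23 (Rw q w') * lift12 (Rw q w'') =
      lift23 (Rw q w'') * lift12 (Rw q w') * lift23 (Rw q w) := by
  have hw'_mul : w' * (1 - q ^ 2 * ((1 + q + q ^ 2)⁻¹) ^ 2 * w * w'') = w + w'' + w * w'' := by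
    rw [hw', div_mul_cancel₀ _ hden]
  simp only [Rw, lift12_add, lift23_add, lift12_one, lift23_one, lift12_smul, lift23_smul]
  exact yangBaxter_of_temperleyLieb
    (by rw [← lift12_mul, P0_mul_self hq.le]) (by rw [← lift23_mul, P0_mul_self hq.le])
    (lift12_P0_mul_lift23_P0_mul_lift12_P0 hq.le) (lift23_P0_mul_lift12_P0_mul_lift23_P0 hq.le)
    hw'_mul
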